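/- Correctness of the process-to-separation-logic translation: for every process P, the traces of P (under the process operational semantics) coincide exactly with the traces of its I/O specification: traces(P) = tracesH(emb(P)). -/

import Mathlib

/-! ## Event systems -/

/-- Event systems: labeled transition systems. -/
structure ES (S E : Type) where
  trans : S → E → S → Prop

namespace ES

/-- Extension of the transition relation to finite sequences of events. -/
inductive mtrans {S E : Type} (M : ES S E) : S → List E → S → Prop
  | nil (s : S) : mtrans M s [] s
  | snoc {s s' s'' : S} {τ : List E} {e : E} :
      mtrans M s τ s' → M.trans s' e s'' → mtrans M s (τ ++ [e]) s''

/-- The traces of an event system starting from a set of initial states. -/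
def traces {S E : Type} (M : ES S E) (I : Set S) : Set (List E) :=
  {τ | ∃ s ∈ I, ∃ s', M.mtrans s τ s'}

/-- Traces starting from a single state. -/
def tracesFrom {S E : Type} (M : ES S E) (s : S) : Set (List E) :=
  M.traces {s}

end ES

/-! ## Chunks and heaps -/

/-- Chunks: I/O permissions `bio(t, v, w, t')` and tokens `token(t)`. -/
inductive Chunk (B V Pl : Type) : Type
  | bio (b : B) (t : Pl) (v w : V) (t' : Pl)
  | token (t : Pl)

/-- Heaps are (possibly infinite) multisets of chunks, i.e. functions to `ℕ∞`. -/
abbrev Heap (B V Pl : Type) := Chunk B V Pl → ℕ∞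

open Classical in
/-- The singleton heap containing one chunk. -/
noncomputable def Heap.single {B V Pl : Type} (c : Chunk B V Pl) : Heap B V Pl :=
  fun c' => if c' = c then 1 else 0

/-- Well-typedness of a chunk w.r.t. a typing function `Ty`. -/
def Chunk.wellTyped {B V Pl : Type} (Ty : B → V → Set V) : Chunk B V Pl → Prop
  | .bio b _ v w _ => w ∈ Ty b v
  | .token _ => True

/-! ## Assertions (coinductive, as an M-type) -/

/-- Heads of the assertion functor. -/
inductive AssnHead (B V Pl : Type) : Type
  | bool (b : Bool)
  | chunk (c : Chunk B V Pl)
  | star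
  | exv
  | expl

/-- Arities (branching types) of the assertion functor. -/
def AssnAr (B V Pl : Type) : AssnHead B V Pl → Type
  | .bool _ => Empty
  | .chunk _ => Empty
  | .star => Bool
  | .exv => V
  | .expl => Pl

/-- The assertion polynomial functor. -/
def AssnF (B V Pl : Type) : PFunctor := ⟨AssnHead B V Pl, AssnAr B V Pl⟩

/-- Coinductive separation logic assertions:
`φ ::=ν b | c | φ₁ ⋆ φ₂ | ∃v. φ | ∃t. φ`. -/
def Assn (B V Pl : Type) : Type := (AssnF B V Pl).M

namespace Assn

variable {B V Pl : Type}

/-- Boolean assertion. -/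
def mkBool (b : Bool) : Assn B V Pl := PFunctor.M.mk ⟨.bool b, fun e => e.elim⟩

/-- Chunk assertion. -/
def mkChunk (c : Chunk B V Pl) : Assn B V Pl := PFunctor.M.mk ⟨.chunk c, fun e => e.elim⟩

/-- Separating conjunction. -/
def star (φ ψ : Assn B V Pl) : Assn B V Pl :=
  PFunctor.M.mk ⟨.star, fun x : Bool => if x then φ else ψ⟩

/-- Existential quantification over values. -/
def exv (f : V → Assn B V Pl) : Assn B V Pl := PFunctor.M.mk ⟨.exv, f⟩

/-- Existential quantification over places. -/
def expl (f : Pl → Assn B V Pl) : Assn B V Pl := PFunctor.M.mk ⟨.expl, f⟩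

end Assn

/-- One step of the satisfaction relation. -/
def SatF {B V Pl : Type} (Ty : B → V → Set V)
    (R : Heap B V Pl → Assn B V Pl → Prop) (h : Heap B V Pl) (φ : Assn B V Pl) : Prop :=
  match PFunctor.M.dest φ with
  | ⟨.bool b, _⟩ => b = true
  | ⟨.chunk c, _⟩ => 0 < h c ∧ c.wellTyped Ty
  | ⟨.star, f⟩ => ∃ h1 h2, h = h1 + h2 ∧ R h1 (f true) ∧ R h2 (f false)
  | ⟨.exv, f⟩ => ∃ v, R h (f v)
  | ⟨.expl, f⟩ => ∃ t, R h (f t)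

/-- Coinductive satisfaction relation `h ⊨ φ`, as the greatest fixed point
of `SatF` (defined as the union of all post-fixed points). -/
def sat {B V Pl : Type} (Ty : B → V → Set V) (h : Heap B V Pl) (φ : Assn B V Pl) : Prop :=
  ∃ R, (∀ h' φ', R h' φ' → SatF Ty R h' φ') ∧ R h φ

/-! ## Heap transition system -/

/-- The heap transition system over `Option Heap` (`none` is the chaotic state ⊥),
with rules Bio, Contradict, and Chaos. -/
inductive HTrans {B V Pl : Type} (Ty : B → V → Set V) :
    Option (Heap B V Pl) → B × V × V → Option (Heap B V Pl) → Prop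
  | bio {b : B} {v w : V} {t t' : Pl} {h : Heap B V Pl} :
      w ∈ Ty b v →
      HTrans Ty (some (Heap.single (.token t) + Heap.single (.bio b t v w t') + h)) (b, v, w)
        (some (Heap.single (.token t') + h))
  | contradict {b : B} {v w w' : V} {t t' : Pl} {h : Heap B V Pl} :
      w ≠ w' → w ∈ Ty b v → w' ∈ Ty b v →
      HTrans Ty (some (Heap.single (.token t) + Heap.single (.bio b t v w t') + h)) (b, v, w')
        none
  | chaos {b : B} {v w : V} : w ∈ Ty b v → HTrans Ty none (b, v, w) none

/-- The heap transition system as an event system. -/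
def hES {B V Pl : Type} (Ty : B → V → Set V) : ES (Option (Heap B V Pl)) (B × V × V) :=
  ⟨HTrans Ty⟩

/-- Traces executable in all heaps of a set of heaps. -/
def tracesH {B V Pl : Type} (Ty : B → V → Set V) (H : Set (Heap B V Pl)) :
    Set (List (B × V × V)) :=
  {τ | ∀ h ∈ H, τ ∈ (hES Ty).tracesFrom (some h)}

/-- Traces of an assertion: traces executable in all its heap models. -/
def tracesHA {B V Pl : Type} (Ty : B → V → Set V) (φ : Assn B V Pl) :
    Set (List (B × V × V)) :=
  tracesH Ty {h | sat Ty h φ}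

/-! ## Processes (coinductive, as an M-type) -/

/-- Heads of the process functor. -/
inductive ProcHead (B V : Type) : Type
  | null
  | pre (b : B) (v : V)
  | choice

/-- Arities of the process functor. -/
def ProcAr (B V : Type) : ProcHead B V → Type
  | .null => Empty
  | .pre _ _ => V
  | .choice => Bool

/-- The process polynomial functor. -/
def ProcF (B V : Type) : PFunctor := ⟨ProcHead B V, ProcAr B V⟩

/-- Coinductive processes: `P ::=ν Null | bio(v, z).P | P₁ ⊕ P₂`. -/
def Proc (B V : Type) : Type := (ProcF B V).M

namespace Proc

variable {B V : Type}

/-- The inactive process. -/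
def null : Proc B V := PFunctor.M.mk ⟨.null, fun e => e.elim⟩

/-- Prefixing with an I/O operation, binding the input in the continuation. -/
def pre (b : B) (v : V) (k : V → Proc B V) : Proc B V := PFunctor.M.mk ⟨.pre b v, k⟩

/-- Binary choice. -/
def choice (P Q : Proc B V) : Proc B V :=
  PFunctor.M.mk ⟨.choice, fun x : Bool => if x then P else Q⟩

end Proc

/-- Operational semantics of processes (rules Pref and Choice). -/
inductive PTrans {B V : Type} (Ty : B → V → Set V) : Proc B V → B × V × V → Proc B V → Prop
  | pref {P : Proc B V} {b : B} {v w : V} {k : V → Proc B V} :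
      w ∈ Ty b v → PFunctor.M.dest P = ⟨.pre b v, k⟩ → PTrans Ty P (b, v, w) (k w)
  | chl {P P' : Proc B V} {a : B × V × V} {f : Bool → Proc B V} :
      PFunctor.M.dest P = ⟨.choice, f⟩ → PTrans Ty (f true) a P' → PTrans Ty P a P'
  | chr {P P' : Proc B V} {a : B × V × V} {f : Bool → Proc B V} :
      PFunctor.M.dest P = ⟨.choice, f⟩ → PTrans Ty (f false) a P' → PTrans Ty P a P'

/-- The process operational semantics as an event system. -/
def pES {B V : Type} (Ty : B → V → Set V) : ES (Proc B V) (B × V × V) := ⟨PTrans Ty⟩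

/-- Countable (ℕ-indexed) choice, defined corecursively from binary choice. -/
def vchoice {B V : Type} (f : ℕ → Proc B V) : Proc B V :=
  PFunctor.M.corec
    (fun s : Proc B V ⊕ ℕ =>
      match s with
      | .inl p => ⟨(PFunctor.M.dest p).1, fun x => Sum.inl ((PFunctor.M.dest p).2 x)⟩
      | .inr n => ⟨.choice, fun x : Bool => if x then Sum.inl (f n) else Sum.inr (n + 1)⟩)
    (Sum.inr 0)

/-! ## Embedding of processes into assertions -/

/-- States of the corecursion defining the embedding `emb`. -/
inductive EmbSt (B V Pl : Type) : Type
  | proc (P : Proc B V) (t : Pl)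
  | ex1 (b : B) (v : V) (k : V → Proc B V) (t t' : Pl)
  | star1 (b : B) (v : V) (k : V → Proc B V) (t t' : Pl) (z : V)
  | leafChunk (c : Chunk B V Pl)

/-- One step of the corecursion defining the embedding `emb`. -/
def embStep {B V Pl : Type} : EmbSt B V Pl → (AssnF B V Pl).Obj (EmbSt B V Pl)
  | .proc P t =>
    match PFunctor.M.dest P with
    | ⟨.null, _⟩ => ⟨.bool true, fun e => e.elim⟩
    | ⟨.pre b v, k⟩ => ⟨.expl, fun t' => .ex1 b v k t t'⟩
    | ⟨.choice, f⟩ => ⟨.star, fun x : Bool => .proc (f x) t⟩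
  | .ex1 b v k t t' => ⟨.exv, fun z => .star1 b v k t t' z⟩
  | .star1 b v k t t' z =>
      ⟨.star, fun x : Bool => if x then .leafChunk (.bio b t v z t') else .proc (k z) t'⟩
  | .leafChunk c => ⟨.chunk c, fun e => e.elim⟩

/-- The embedding `emb(P, t)` of a process and a place into an assertion:
`emb(Null, t) = true`, `emb(bio(v,z).P, t) = ∃t',z'. bio(t,v,z',t') ⋆ emb(P[z'/z], t')`,
`emb(P₁ ⊕ P₂, t) = emb(P₁, t) ⋆ emb(P₂, t)`. -/
def embA {B V Pl : Type} (P : Proc B V) (t : Pl) : Assn B V Pl :=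
  PFunctor.M.corec embStep (.proc P t)

/-- The process assertion `emb(P) = ∃t. token(t) ⋆ emb(P, t)`. -/
def procAssn {B V : Type} (Pl : Type) (P : Proc B V) : Assn B V Pl :=
  Assn.expl (fun t => Assn.star (Assn.mkChunk (.token t)) (embA P t))

/-- ℕ-indexed iterated separating conjunction, defined corecursively. -/
def AllStar {B V Pl : Type} (f : ℕ → Assn B V Pl) : Assn B V Pl :=
  PFunctor.M.corec
    (fun s : Assn B V Pl ⊕ ℕ =>
      match s with
      | .inl a => ⟨(PFunctor.M.dest a).1, fun x => Sum.inl ((PFunctor.M.dest a).2 x)⟩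
      | .inr n => ⟨.star, fun x : Bool => if x then Sum.inl (f n) else Sum.inr (n + 1)⟩)
    (Sum.inr 0)

/-! ## I/O-guarded event systems and their translation to processes -/

/-- An I/O-guarded event system: guards depend only on the state and the output,
updates compute the next state from output and input. -/
structure IOGES (B V S : Type) where
  guard : B → V → S → Prop
  update : B → V → V → S → S

/-- The event system associated with an I/O-guarded event system:
`s →bio(v,w) s'` iff the guard holds, `w ∈ Ty(bio, v)`, and `s' = U(s)`. -/
def IOGES.es {B V S : Type} (G : IOGES B V S) (Ty : B → V → Set V) : ES S (B × V × V) :=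
  ⟨fun s a s' => G.guard a.1 a.2.1 s ∧ a.2.2 ∈ Ty a.1 a.2.1 ∧
      s' = G.update a.1 a.2.1 a.2.2 s⟩

/-- States of the corecursion defining `proc(G, s)`. -/
inductive PrSt (S : Type) : Type
  | spine (n : ℕ) (s : S)
  | item (n : ℕ) (s : S)

open Classical in
/-- The corecursive translation `proc(G, s)` of an I/O-guarded event system into
a process: the countable choice over all `bio ∈ Bios` and outputs `v` whose guard
holds in `s` of the prefixed processes `bio(v, z). proc(G, U_{bio(v,z)}(s))`,
via an enumeration `e` of the pairs `(bio, v)`. -/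
noncomputable def procOf {B V S : Type} (e : ℕ → B × V) (G : IOGES B V S) (s : S) :
    Proc B V :=
  PFunctor.M.corec
    (fun st : PrSt S =>
      match st with
      | .spine n s => ⟨.choice, fun x : Bool => if x then .item n s else .spine (n + 1) s⟩
      | .item n s =>
          if G.guard (e n).1 (e n).2 s then
            ⟨.pre (e n).1 (e n).2, fun w => .spine 0 (G.update (e n).1 (e n).2 w s)⟩
          else ⟨.null, fun x => x.elim⟩)
    (.spine 0 s)

/-! ## Canonical heap models -/

open Classical in
/-- The I/O permission (as a singleton heap, or the empty heap) found at position
`pos` of process `P` under input schedule `ρ`, with previous place `pp`,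
current position `cp`, and traversed trace `τ`. -/
noncomputable def pm {B V : Type} (ρ : List (B × V × V) → B → V → V) :
    Proc B V → List (B × V × V) → List Bool → List Bool → List Bool →
      Heap B V (List Bool)
  | P, τ, pp, cp, [] =>
    (match PFunctor.M.dest P with
     | ⟨.pre b v, _⟩ => Heap.single (Chunk.bio b pp v (ρ τ b v) (cp ++ [true]))
     | _ => 0)
  | P, τ, pp, cp, d :: pos =>
    (match PFunctor.M.dest P, d with
     | ⟨.pre b v, k⟩, true =>
         pm ρ (k (ρ τ b v)) (τ ++ [(b, v, ρ τ b v)]) (cp ++ [true]) (cp ++ [true]) pos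
     | ⟨.choice, f⟩, d' => pm ρ (f d') τ pp (cp ++ [d']) pos
     | _, _ => 0)

/-- Pointwise (possibly infinite) sum of a family of heaps. -/
noncomputable def hSum {B V Pl ι : Type} (f : ι → Heap B V Pl) : Heap B V Pl :=
  fun c => ⨆ F : Finset ι, ∑ i ∈ F, f i c

/-- The canonical model construction `gmod(P, ρ, τ, ppos, cpos)`: the multiset
sum of `pm(P, ρ, τ, ppos, cpos, pos)` over all positions `pos`. -/
noncomputable def gmod {B V : Type} (ρ : List (B × V × V) → B → V → V)
    (P : Proc B V) (τ : List (B × V × V)) (pp cp : List Bool) :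
    Heap B V (List Bool) :=
  hSum (fun pos : List Bool => pm ρ P τ pp cp pos)

/-- Well-typedness of an input schedule. -/
def schedWT {B V : Type} (Ty : B → V → Set V) (ρ : List (B × V × V) → B → V → V) : Prop :=
  ∀ τ b v, ρ τ b v ∈ Ty b v

/-- The canonical model `cmod(P, ρ) = gmod(P, ρ, [], [], [])`. -/
noncomputable def cmod {B V : Type} (ρ : List (B × V × V) → B → V → V) (P : Proc B V) :
    Heap B V (List Bool) :=
  gmod ρ P [] [] []

/-- The canonical model with a token added at the previous place. -/
noncomputable def gmodTok {B V : Type} (ρ : List (B × V × V) → B → V → V)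
    (P : Proc B V) (τ : List (B × V × V)) (pp cp : List Bool) :
    Heap B V (List Bool) :=
  Heap.single (Chunk.token pp) + gmod ρ P τ pp cp

/-- The set `can(P)` of token-added canonical models over all well-typed schedules. -/
def canSet {B V : Type} (Ty : B → V → Set V) (P : Proc B V) :
    Set (Heap B V (List Bool)) :=
  {h | ∃ ρ, schedWT Ty ρ ∧ h = Heap.single (Chunk.token []) + cmod ρ P}

/-- The set of source places of I/O permissions in a heap. -/
def srcplaces {B V Pl : Type} (h : Heap B V Pl) : Set Pl :=
  {t | ∃ b v w t', 0 < h (Chunk.bio b t v w t')}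

/-- A heap is dead for a position if it has no tokens and no source place
extending the position. -/
def deadFor {B V : Type} (pos : List Bool) (h : Heap B V (List Bool)) : Prop :=
  (∀ t, h (Chunk.token t) = 0) ∧ ∀ p' ∈ srcplaces h, ¬ pos <+: p'

open Classical in
/-- The witness schedule `ρwit(σ)`: for proper prefixes `τ` of `σ`, return the
input of the next matching action of `σ`; otherwise an arbitrary well-typed value
(given by `pick`). -/
noncomputable def rhoWit {B V : Type} (pick : B → V → V) (σ : List (B × V × V)) :
    List (B × V × V) → B → V → V :=
  fun τ b v =>
    if h : ∃ w, ∃ rest, τ <+: σ ∧ σ.drop τ.length = (b, v, w) :: rest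
    then h.choose
    else pick b v

/-!
A step `bio(v, w)` of `P` can be mimicked in every heap model of `emb(P)`: the model holds the
token at some place `t` and a permission `bio(t, v, z, t')` for the prefix being executed. If
`z = w`, rule Bio consumes both and leaves a model of the embedding of the continuation; otherwise
rule Contradict moves to the chaotic state, which can perform every well-typed action.

Conversely, for an input schedule `ρ` the canonical model `cmod ρ P` holds one permission for each
prefix of `P` reached by following `ρ`, with places recording positions in `P`, and it is a model of
`emb(P)`. So a trace `σ` of `emb(P)` is a trace of the canonical model for the witness schedule that
answers every I/O as `σ` does. Along that run the token sits at the position of the residual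
process, Contradict never applies, and every Bio step consumes the permission of a prefix reached
from the residual process through choices only, i.e. it is a step of `P`. The permissions of the
discarded choice branches remain as junk that is dead for the new position (`deadFor`).
-/

theorem ES.mem_tracesFrom {S E : Type} {M : ES S E} {s : S} {τ : List E} :
    τ ∈ M.tracesFrom s ↔ ∃ s', M.mtrans s τ s' := by
  simp [ES.tracesFrom, ES.traces]

theorem tracesH_anti {B V Pl : Type} {Ty : B → V → Set V} {H₁ H₂ : Set (Heap B V Pl)}
    (h : H₁ ⊆ H₂) : tracesH Ty H₂ ⊆ tracesH Ty H₁ :=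
  fun _ hτ x hx => hτ x (h hx)

namespace Heap

variable {B V Pl : Type}

theorem single_apply_self (c : Chunk B V Pl) : single c c = 1 := if_pos rfl

theorem single_apply_of_ne {c c' : Chunk B V Pl} (h : c' ≠ c) : single c c' = 0 := if_neg h

theorem single_add_left_cancel {c : Chunk B V Pl} {H H' : Heap B V Pl}
    (h : single c + H = single c + H') : H = H' := by
  funext c'
  refine WithTop.add_left_cancel ?_ (congrFun h c')
  unfold single
  split_ifs
  exacts [ENat.one_ne_top, ENat.zero_ne_top]

theorem exists_eq_single_add {H : Heap B V Pl} {c : Chunk B V Pl} (h : 0 < H c) :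
    ∃ H', H = single c + H' := by
  obtain ⟨n, hn⟩ := exists_add_of_le (Order.one_le_iff_pos.mpr h)
  classical
  refine ⟨Function.update H c n, funext fun c' => ?_⟩
  by_cases hc : c' = c
  · subst hc; simp [single, hn]
  · simp [single, hc]

theorem eq_of_single_pos {c c' : Chunk B V Pl} (h : 0 < single c c') :
    c' = c := by
  by_contra hne
  rw [single_apply_of_ne hne] at h
  exact h.false

end Heap

section Satisfaction

variable {B V Pl : Type} {Ty : B → V → Set V}

theorem SatF.mono {R S : Heap B V Pl → Assn B V Pl → Prop} {h : Heap B V Pl}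
    {φ : Assn B V Pl} (hs : SatF Ty R h φ) (hRS : ∀ h φ, R h φ → S h φ) : SatF Ty S h φ := by
  unfold SatF at hs ⊢
  generalize PFunctor.M.dest φ = p at hs ⊢
  obtain ⟨a, f⟩ := p
  cases a with
  | bool | chunk => exact hs
  | star => obtain ⟨h₁, h₂, rfl, r₁, r₂⟩ := hs; exact ⟨h₁, h₂, rfl, hRS _ _ r₁, hRS _ _ r₂⟩
  | exv | expl => obtain ⟨x, r⟩ := hs; exact ⟨x, hRS _ _ r⟩

theorem satF_of_sat {h : Heap B V Pl} {φ : Assn B V Pl} (hs : sat Ty h φ) :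
    SatF Ty (sat Ty) h φ :=
  let ⟨_, hpost, hR⟩ := hs
  (hpost _ _ hR).mono fun _ _ hr => ⟨_, hpost, hr⟩

theorem sat_iff_satF {h : Heap B V Pl} {φ : Assn B V Pl} :
    sat Ty h φ ↔ SatF Ty (sat Ty) h φ :=
  ⟨satF_of_sat, fun hs => ⟨SatF Ty (sat Ty), fun _ _ h' => h'.mono fun _ _ => satF_of_sat, hs⟩⟩

theorem sat_mkChunk_iff {h : Heap B V Pl} {c : Chunk B V Pl} :
    sat Ty h (Assn.mkChunk c) ↔ 0 < h c ∧ c.wellTyped Ty := by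
  rw [sat_iff_satF]
  unfold SatF Assn.mkChunk
  erw [PFunctor.M.dest_mk]

theorem sat_star_iff {h : Heap B V Pl} {φ ψ : Assn B V Pl} :
    sat Ty h (Assn.star φ ψ) ↔ ∃ h₁ h₂, h = h₁ + h₂ ∧ sat Ty h₁ φ ∧ sat Ty h₂ ψ := by
  rw [sat_iff_satF]
  unfold SatF Assn.star
  erw [PFunctor.M.dest_mk]
  rfl

theorem sat_expl_iff {h : Heap B V Pl} {f : Pl → Assn B V Pl} :
    sat Ty h (Assn.expl f) ↔ ∃ t, sat Ty h (f t) := by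
  rw [sat_iff_satF]
  unfold SatF Assn.expl
  erw [PFunctor.M.dest_mk]
  rfl

end Satisfaction

section Embedding

variable {B V Pl : Type} {Ty : B → V → Set V} {R : Heap B V Pl → Assn B V Pl → Prop}
  {h : Heap B V Pl}

theorem satF_embA_null {P : Proc B V} {t : Pl} {f : Empty → Proc B V}
    (hd : PFunctor.M.dest P = ⟨.null, f⟩) : SatF Ty R h (embA P t) := by
  unfold SatF embA
  rw [PFunctor.M.dest_corec]
  simp only [embStep, hd]
  rfl

theorem satF_embA_pre {P : Proc B V} {t : Pl} {b : B} {v : V} {k : V → Proc B V}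
    (hd : PFunctor.M.dest P = ⟨.pre b v, k⟩) :
    SatF Ty R h (embA P t) ↔ ∃ t', R h (PFunctor.M.corec embStep (.ex1 b v k t t')) := by
  unfold SatF embA
  rw [PFunctor.M.dest_corec]
  simp only [embStep, hd]
  rfl

theorem satF_embA_choice {P : Proc B V} {t : Pl} {f : Bool → Proc B V}
    (hd : PFunctor.M.dest P = ⟨.choice, f⟩) :
    SatF Ty R h (embA P t) ↔
      ∃ h₁ h₂, h = h₁ + h₂ ∧ R h₁ (embA (f true) t) ∧ R h₂ (embA (f false) t) := by
  unfold SatF embA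
  rw [PFunctor.M.dest_corec]
  simp only [embStep, hd]
  rfl

theorem satF_embStep_ex1 {b : B} {v : V} {k : V → Proc B V} {t t' : Pl} :
    SatF Ty R h (PFunctor.M.corec embStep (.ex1 b v k t t')) ↔
      ∃ z, R h (PFunctor.M.corec embStep (.star1 b v k t t' z)) := by
  unfold SatF
  rw [PFunctor.M.dest_corec]
  rfl

theorem satF_embStep_star1 {b : B} {v : V} {k : V → Proc B V} {t t' : Pl} {z : V} :
    SatF Ty R h (PFunctor.M.corec embStep (.star1 b v k t t' z)) ↔
      ∃ h₁ h₂, h = h₁ + h₂ ∧ R h₁ (PFunctor.M.corec embStep (.leafChunk (.bio b t v z t'))) ∧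
        R h₂ (embA (k z) t') := by
  unfold SatF
  rw [PFunctor.M.dest_corec]
  rfl

theorem satF_embStep_leafChunk {c : Chunk B V Pl} :
    SatF Ty R h (PFunctor.M.corec embStep (.leafChunk c)) ↔ 0 < h c ∧ c.wellTyped Ty := by
  unfold SatF
  rw [PFunctor.M.dest_corec]
  rfl

/-- `sat Ty h (embA P t)` is the greatest fixed point of `SatEmbF Ty`, with unfolding
`satEmbF_of_sat_embA` and coinduction principle `sat_embA_of_postfixed`. -/
def SatEmbF (Ty : B → V → Set V) (R : Heap B V Pl → Proc B V → Pl → Prop)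
    (h : Heap B V Pl) (P : Proc B V) (t : Pl) : Prop :=
  match PFunctor.M.dest P with
  | ⟨.null, _⟩ => True
  | ⟨.pre b v, k⟩ =>
      ∃ t' z h₁ h₂, h = h₁ + h₂ ∧ 0 < h₁ (.bio b t v z t') ∧ z ∈ Ty b v ∧ R h₂ (k z) t'
  | ⟨.choice, f⟩ => ∃ h₁ h₂, h = h₁ + h₂ ∧ R h₁ (f true) t ∧ R h₂ (f false) t

theorem satEmbF_of_sat_embA {P : Proc B V} {t : Pl} (hs : sat Ty h (embA P t)) :
    SatEmbF Ty (fun h P t => sat Ty h (embA P t)) h P t := by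
  unfold SatEmbF
  rcases hd : PFunctor.M.dest P with ⟨_ | ⟨b, v⟩ | _, k⟩
  · trivial
  · obtain ⟨t', hs⟩ := (satF_embA_pre hd).mp (satF_of_sat hs)
    obtain ⟨z, hs⟩ := satF_embStep_ex1.mp (satF_of_sat hs)
    obtain ⟨h₁, h₂, rfl, hchunk, hk⟩ := satF_embStep_star1.mp (satF_of_sat hs)
    obtain ⟨hpos, hz⟩ := satF_embStep_leafChunk.mp (satF_of_sat hchunk)
    exact ⟨t', z, h₁, h₂, rfl, hpos, hz, hk⟩
  · exact (satF_embA_choice hd).mp (satF_of_sat hs)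

inductive EmbSatRel (Ty : B → V → Set V) (R : Heap B V Pl → Proc B V → Pl → Prop) :
    Heap B V Pl → Assn B V Pl → Prop
  | proc {h P t} : R h P t → EmbSatRel Ty R h (embA P t)
  | ex1 {h b v k t t'} {z : V} {h₁ h₂ : Heap B V Pl} : h = h₁ + h₂ → 0 < h₁ (.bio b t v z t') →
      z ∈ Ty b v → R h₂ (k z) t' → EmbSatRel Ty R h (PFunctor.M.corec embStep (.ex1 b v k t t'))
  | star1 {h b v k t t' z} {h₁ h₂ : Heap B V Pl} : h = h₁ + h₂ → 0 < h₁ (.bio b t v z t') →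
      z ∈ Ty b v → R h₂ (k z) t' →
      EmbSatRel Ty R h (PFunctor.M.corec embStep (.star1 b v k t t' z))
  | leafChunk {h c} : 0 < h c → c.wellTyped Ty →
      EmbSatRel Ty R h (PFunctor.M.corec embStep (.leafChunk c))

theorem sat_embA_of_postfixed {R : Heap B V Pl → Proc B V → Pl → Prop}
    (hR : ∀ h P t, R h P t → SatEmbF Ty R h P t) {P : Proc B V} {t : Pl} (hRP : R h P t) :
    sat Ty h (embA P t) := by
  refine ⟨EmbSatRel Ty R, fun _ _ hφ => ?_, .proc hRP⟩
  cases hφ with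
  | @proc P t hRP =>
    have hstep := hR _ P t hRP
    unfold SatEmbF at hstep
    rcases hd : PFunctor.M.dest P with ⟨_ | ⟨b, v⟩ | _, k⟩ <;> rw [hd] at hstep
    · exact satF_embA_null hd
    · obtain ⟨t', z, h₁, h₂, rfl, hpos, hz, hk⟩ := hstep
      exact (satF_embA_pre hd).mpr ⟨t', .ex1 rfl hpos hz hk⟩
    · obtain ⟨h₁, h₂, rfl, hl, hr⟩ := hstep
      exact (satF_embA_choice hd).mpr ⟨h₁, h₂, rfl, .proc hl, .proc hr⟩
  | ex1 he hpos hz hk => exact satF_embStep_ex1.mpr ⟨_, .star1 he hpos hz hk⟩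
  | star1 he hpos hz hk =>
    exact satF_embStep_star1.mpr ⟨_, _, he, .leafChunk hpos hz, .proc hk⟩
  | leafChunk hpos hc => exact satF_embStep_leafChunk.mpr ⟨hpos, hc⟩

theorem sat_procAssn_iff {P : Proc B V} {h : Heap B V Pl} :
    sat Ty h (procAssn Pl P) ↔
      ∃ t h' hj, h = Heap.single (.token t) + h' + hj ∧ sat Ty h' (embA P t) := by
  simp only [procAssn, sat_expl_iff, sat_star_iff, sat_mkChunk_iff]
  refine exists_congr fun t => ⟨?_, ?_⟩
  · rintro ⟨h₁, h₂, rfl, ⟨htok, -⟩, hs⟩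
    obtain ⟨hj, rfl⟩ := Heap.exists_eq_single_add htok
    exact ⟨h₂, hj, by abel, hs⟩
  · rintro ⟨h', hj, rfl, hs⟩
    refine ⟨Heap.single (.token t) + hj, h', by abel, ⟨?_, trivial⟩, hs⟩
    simp [Heap.single_apply_self]

end Embedding

section Simulation

variable {B V Pl : Type} {Ty : B → V → Set V}

theorem PTrans.wellTyped {P P' : Proc B V} {a : B × V × V} (h : PTrans Ty P a P') :
    a.2.2 ∈ Ty a.1 a.2.1 := by
  induction h with
  | pref hw _ => exact hw
  | chl _ _ ih | chr _ _ ih => exact ih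

theorem PTrans.exists_hTrans {P P' : Proc B V} {a : B × V × V} (hPT : PTrans Ty P a P')
    {t : Pl} {hP : Heap B V Pl} (hj : Heap B V Pl) (hs : sat Ty hP (embA P t)) :
    ∃ s', HTrans Ty (some (Heap.single (.token t) + hP + hj)) a s' ∧
      ∀ h', s' = some h' → sat Ty h' (procAssn Pl P') := by
  induction hPT generalizing hP hj with
  | @pref P b v w k hw hd =>
    have hstep := satEmbF_of_sat_embA hs
    unfold SatEmbF at hstep
    rw [hd] at hstep
    obtain ⟨t', z, h₁, h₂, rfl, hpos, hz, hk⟩ := hstep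
    obtain ⟨h₁', rfl⟩ := Heap.exists_eq_single_add hpos
    have hstate : Heap.single (.token t) + (Heap.single (.bio b t v z t') + h₁' + h₂) + hj =
        Heap.single (.token t) + Heap.single (.bio b t v z t') + (h₁' + h₂ + hj) := by abel
    rw [hstate]
    by_cases hzw : z = w
    · subst hzw
      refine ⟨_, .bio hw, fun h' hh' => ?_⟩
      cases hh'
      exact sat_procAssn_iff.mpr ⟨t', h₂, h₁' + hj, by abel, hk⟩
    · exact ⟨none, .contradict hzw hz hw, by simp⟩
  | @chl P P' a f hd _ ih =>
    obtain ⟨h₁, h₂, rfl, hl, -⟩ := (satF_embA_choice hd).mp (satF_of_sat hs)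
    obtain ⟨s', hstep, hs'⟩ := ih (h₂ + hj) hl
    refine ⟨s', ?_, hs'⟩
    convert hstep using 2
    abel
  | @chr P P' a f hd _ ih =>
    obtain ⟨h₁, h₂, rfl, -, hr⟩ := (satF_embA_choice hd).mp (satF_of_sat hs)
    obtain ⟨s', hstep, hs'⟩ := ih (h₁ + hj) hr
    refine ⟨s', ?_, hs'⟩
    convert hstep using 2
    abel

theorem exists_mtrans_hES_of_mtrans_pES {P P' : Proc B V} {τ : List (B × V × V)}
    (hm : (pES Ty).mtrans P τ P') {h : Heap B V Pl} (hs : sat Ty h (procAssn Pl P)) :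
    ∃ s', (hES Ty).mtrans (some h) τ s' ∧ ∀ h', s' = some h' → sat Ty h' (procAssn Pl P') := by
  induction hm with
  | nil => exact ⟨some h, .nil _, fun h' hh' => Option.some_inj.mp hh' ▸ hs⟩
  | snoc _ hstep ih =>
    obtain ⟨_ | h₁, hm₁, hs₁⟩ := ih
    · exact ⟨none, hm₁.snoc (HTrans.chaos hstep.wellTyped), by simp⟩
    · obtain ⟨t, hP, hj, rfl, hsP⟩ := sat_procAssn_iff.mp (hs₁ _ rfl)
      obtain ⟨s', hstep', hs'⟩ := hstep.exists_hTrans hj hsP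
      exact ⟨s', hm₁.snoc hstep', hs'⟩

theorem tracesFrom_subset_tracesHA (P : Proc B V) :
    (pES Ty).tracesFrom P ⊆ tracesHA Ty (procAssn Pl P) := by
  intro τ hτ h hs
  obtain ⟨P', hm⟩ := ES.mem_tracesFrom.mp hτ
  obtain ⟨s', hm', -⟩ := exists_mtrans_hES_of_mtrans_pES hm hs
  exact ES.mem_tracesFrom.mpr ⟨s', hm'⟩

end Simulation

section HeapSum

variable {B V Pl ι : Type}

theorem hasSum_hSum (f : ι → Heap B V Pl) (c : Chunk B V Pl) :
    HasSum (fun i => f i c) (hSum f c) :=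
  tendsto_atTop_iSup fun _ _ => Finset.sum_le_sum_of_subset

theorem exists_pos_of_hSum_pos {f : ι → Heap B V Pl} {c : Chunk B V Pl} (h : 0 < hSum f c) :
    ∃ i, 0 < f i c := by
  obtain ⟨F, hF⟩ := lt_iSup_iff.mp h
  obtain ⟨i, -, hi⟩ := Finset.sum_pos_iff.mp hF
  exact ⟨i, hi⟩

theorem hSum_zero : hSum (fun _ : ι => (0 : Heap B V Pl)) = 0 :=
  funext fun c => (hasSum_hSum _ c).unique hasSum_zero

def boolListEquiv : Unit ⊕ (List Bool ⊕ List Bool) ≃ List Bool where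
  toFun := Sum.elim (fun _ => []) (Sum.elim (List.cons true) (List.cons false))
  invFun
    | [] => .inl ()
    | true :: l => .inr (.inl l)
    | false :: l => .inr (.inr l)
  left_inv := by rintro (⟨⟩ | l | l) <;> rfl
  right_inv := by rintro (_ | ⟨_ | _, l⟩) <;> rfl

theorem hSum_boolList (f : List Bool → Heap B V Pl) :
    hSum f = f [] + (hSum (fun l => f (true :: l)) + hSum (fun l => f (false :: l))) := by
  funext c
  refine (hasSum_hSum f c).unique ?_
  rw [← boolListEquiv.hasSum_iff]
  exact (hasSum_single () fun _ h => absurd rfl h).sum ((hasSum_hSum _ c).sum (hasSum_hSum _ c))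

end HeapSum

section CanonicalModel

variable {B V : Type} {ρ : List (B × V × V) → B → V → V} {τ : List (B × V × V)}
  {pp cp : List Bool}

theorem gmod_choice {P : Proc B V} {f : Bool → Proc B V}
    (hd : PFunctor.M.dest P = ⟨.choice, f⟩) :
    gmod ρ P τ pp cp =
      gmod ρ (f true) τ pp (cp ++ [true]) + gmod ρ (f false) τ pp (cp ++ [false]) := by
  unfold gmod
  rw [hSum_boolList]
  simp only [pm, hd, zero_add]

theorem gmod_pre {P : Proc B V} {b : B} {v : V} {k : V → Proc B V}
    (hd : PFunctor.M.dest P = ⟨.pre b v, k⟩) :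
    gmod ρ P τ pp cp = Heap.single (.bio b pp v (ρ τ b v) (cp ++ [true])) +
      gmod ρ (k (ρ τ b v)) (τ ++ [(b, v, ρ τ b v)]) (cp ++ [true]) (cp ++ [true]) := by
  unfold gmod
  rw [hSum_boolList]
  simp only [pm, hd, hSum_zero, add_zero]

theorem sat_gmod {Ty : B → V → Set V} (hρ : schedWT Ty ρ) (P : Proc B V) (τ pp cp) :
    sat Ty (gmod ρ P τ pp cp) (embA P pp) := by
  refine sat_embA_of_postfixed (R := fun h P t => ∃ τ cp, h = gmod ρ P τ t cp) ?_ ⟨τ, cp, rfl⟩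
  rintro _ P t ⟨τ, cp, rfl⟩
  unfold SatEmbF
  rcases hd : PFunctor.M.dest P with ⟨_ | ⟨b, v⟩ | _, k⟩
  · trivial
  · exact ⟨cp ++ [true], ρ τ b v, _, _, gmod_pre hd, by simp [Heap.single_apply_self],
      hρ τ b v, _, _, rfl⟩
  · exact ⟨_, _, gmod_choice hd, ⟨τ, _, rfl⟩, ⟨τ, _, rfl⟩⟩

theorem canSet_subset_models (Ty : B → V → Set V) (P : Proc B V) :
    canSet Ty P ⊆ {h | sat Ty h (procAssn (List Bool) P)} := by
  rintro _ ⟨ρ, hρ, rfl⟩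
  exact sat_procAssn_iff.mpr ⟨[], cmod ρ P, 0, (add_zero _).symm, sat_gmod hρ P [] [] []⟩

end CanonicalModel

namespace Proc

variable {B V : Type}

inductive PreAt : Proc B V → List Bool → B → V → (V → Proc B V) → Prop
  | here {P : Proc B V} {b : B} {v : V} {k : V → Proc B V} :
      PFunctor.M.dest P = ⟨.pre b v, k⟩ → PreAt P [] b v k
  | choice {P : Proc B V} {f : Bool → Proc B V} {pos b v k} (x : Bool) :
      PFunctor.M.dest P = ⟨.choice, f⟩ → PreAt (f x) pos b v k → PreAt P (x :: pos) b v k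

theorem PreAt.pTrans {Ty : B → V → Set V} {P : Proc B V} {pos b v k} (hP : PreAt P pos b v k)
    {w : V} (hw : w ∈ Ty b v) : PTrans Ty P (b, v, w) (k w) := by
  induction hP with
  | here hd => exact .pref hw hd
  | choice x hd _ ih => cases x with
    | false => exact .chr hd (ih hw)
    | true => exact .chl hd (ih hw)

end Proc

section CanonicalChunks

variable {B V : Type} {ρ : List (B × V × V) → B → V → V} {τ : List (B × V × V)}
  {pp cp : List Bool}

theorem exists_of_pm_pos {c : Chunk B V (List Bool)} :
    ∀ {pos P τ pp cp}, 0 < pm ρ P τ pp cp pos c →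
      ∃ b t v w, c = .bio b t v w (cp ++ pos ++ [true]) ∧
        ((t = pp ∧ w = ρ τ b v ∧ ∃ k, P.PreAt pos b v k) ∨ ∃ α, t = cp ++ α ++ [true])
  | [], P, τ, pp, cp, h => by
    rcases hd : PFunctor.M.dest P with ⟨_ | ⟨b, v⟩ | _, k⟩ <;> simp only [pm, hd] at h
    · exact absurd h (lt_irrefl 0)
    · exact ⟨b, pp, v, _, by simpa using Heap.eq_of_single_pos h, .inl ⟨rfl, rfl, k, .here hd⟩⟩
    · exact absurd h (lt_irrefl 0)
  | d :: pos, P, τ, pp, cp, h => by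
    rcases hd : PFunctor.M.dest P with ⟨_ | ⟨b, v⟩ | _, k⟩
    · simp only [pm, hd] at h
      exact absurd h (lt_irrefl _)
    · cases d
      · simp only [pm, hd] at h
        exact absurd h (lt_irrefl _)
      · simp only [pm, hd] at h
        obtain ⟨b', t, v', w, rfl, ht⟩ := exists_of_pm_pos h
        refine ⟨b', t, v', w, by simp, .inr ?_⟩
        rcases ht with ⟨rfl, -⟩ | ⟨α, rfl⟩
        exacts [⟨[], by simp⟩, ⟨true :: α, by simp⟩]
    · simp only [pm, hd] at h
      obtain ⟨b', t, v', w, rfl, ht⟩ := exists_of_pm_pos h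
      refine ⟨b', t, v', w, by simp, ?_⟩
      rcases ht with ⟨rfl, hw, k', hk'⟩ | ⟨α, rfl⟩
      exacts [.inl ⟨rfl, hw, k', .choice d hd hk'⟩, .inr ⟨d :: α, by simp⟩]

theorem gmod_token {P : Proc B V} {s : List Bool} : gmod ρ P τ pp cp (.token s) = 0 := by
  by_contra h
  obtain ⟨pos, hpos⟩ := exists_pos_of_hSum_pos (pos_iff_ne_zero.mpr h)
  obtain ⟨_, _, _, _, h, -⟩ := exists_of_pm_pos hpos
  cases h

theorem deadFor_zero (p : List Bool) : deadFor p (0 : Heap B V (List Bool)) :=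
  ⟨fun _ => rfl, fun _ ⟨_, _, _, _, h⟩ => absurd h (lt_irrefl _)⟩

theorem deadFor.add {p : List Bool} {d₁ d₂ : Heap B V (List Bool)} (h₁ : deadFor p d₁)
    (h₂ : deadFor p d₂) : deadFor p (d₁ + d₂) := by
  refine ⟨fun t => by simp [h₁.1 t, h₂.1 t], fun t ⟨b, v, w, t', ht⟩ => ?_⟩
  rcases add_pos_iff.mp ht with ht | ht
  exacts [h₁.2 t ⟨b, v, w, t', ht⟩, h₂.2 t ⟨b, v, w, t', ht⟩]

theorem deadFor.of_prefix {p p' : List Bool} {d : Heap B V (List Bool)} (h : deadFor p d)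
    (hp : p <+: p') : deadFor p' d :=
  ⟨h.1, fun t ht hp' => h.2 t ht (hp.trans hp')⟩

theorem deadFor_gmod {P : Proc B V} {p : List Bool} (hpp : ¬ p <+: pp)
    (hcp : ∀ t, cp <+: t → ¬ p <+: t) : deadFor p (gmod ρ P τ pp cp) := by
  refine ⟨fun _ => gmod_token, fun t ⟨b, v, w, t', h⟩ => ?_⟩
  obtain ⟨pos, hpos⟩ := exists_pos_of_hSum_pos h
  obtain ⟨_, _, _, _, heq, ht⟩ := exists_of_pm_pos hpos
  cases heq
  rcases ht with ⟨rfl, -⟩ | ⟨α, rfl⟩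
  exacts [hpp, hcp _ ⟨α ++ [true], by simp⟩]

theorem gmod_eq_of_preAt {P : Proc B V} {pos : List Bool} {b : B} {v : V} {k : V → Proc B V}
    (hP : P.PreAt pos b v k) (hpp : pp <+: cp) :
    ∃ d, gmod ρ P τ pp cp = Heap.single (.bio b pp v (ρ τ b v) (cp ++ pos ++ [true])) +
        gmod ρ (k (ρ τ b v)) (τ ++ [(b, v, ρ τ b v)]) (cp ++ pos ++ [true]) (cp ++ pos ++ [true]) +
        d ∧ deadFor (cp ++ pos ++ [true]) d := by
  induction hP generalizing cp with
  | here hd => exact ⟨0, by simp [gmod_pre hd], deadFor_zero _⟩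
  | @choice P f pos b v k x hd _ ih =>
    obtain ⟨d, hdec, hdead⟩ := ih (hpp.trans (List.prefix_append cp [x]))
    have hx : cp ++ [x] ++ pos = cp ++ x :: pos := by simp
    rw [hx] at hdec hdead
    have hsplit : gmod ρ P τ pp cp =
        gmod ρ (f x) τ pp (cp ++ [x]) + gmod ρ (f !x) τ pp (cp ++ [!x]) := by
      cases x <;> simp [gmod_choice hd, add_comm]
    refine ⟨d + gmod ρ (f !x) τ pp (cp ++ [!x]), by rw [hsplit, hdec]; abel, hdead.add ?_⟩
    refine deadFor_gmod (fun h => ?_) (fun t ht h => ?_)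
    · have := h.length_le.trans hpp.length_le
      simp at this
    · have h' := List.prefix_of_prefix_length_le ht h (by simp)
      simp at h'

end CanonicalChunks

section WitnessSchedule

variable {B V : Type} {Ty : B → V → Set V}

theorem HTrans.wellTyped {Pl : Type} {s s' : Option (Heap B V Pl)} {a : B × V × V}
    (h : HTrans Ty s a s') : a.2.2 ∈ Ty a.1 a.2.1 := by
  cases h <;> assumption

theorem mem_wellTyped_of_mtrans_hES {Pl : Type} {s s' : Option (Heap B V Pl)}
    {τ : List (B × V × V)} (h : (hES Ty).mtrans s τ s') : ∀ a ∈ τ, a.2.2 ∈ Ty a.1 a.2.1 := by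
  induction h with
  | nil => simp
  | snoc _ hstep ih =>
    simp only [List.mem_append, List.mem_singleton]
    rintro a (ha | rfl)
    exacts [ih a ha, HTrans.wellTyped hstep]

theorem rhoWit_eq {pick : B → V → V} {σ τ : List (B × V × V)} {b : B} {v w : V}
    (hτσ : τ ++ [(b, v, w)] <+: σ) : rhoWit pick σ τ b v = w := by
  obtain ⟨r, hr⟩ := hτσ
  have hdrop : σ.drop τ.length = (b, v, w) :: r := by simp [← hr]
  have hex : ∃ w' rest, τ <+: σ ∧ σ.drop τ.length = (b, v, w') :: rest :=
    ⟨w, r, ⟨(b, v, w) :: r, by simp [← hr]⟩, hdrop⟩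
  rw [rhoWit, dif_pos hex]
  obtain ⟨_, -, hchoose⟩ := hex.choose_spec
  have := hdrop.symm.trans hchoose
  simp only [List.cons.injEq, Prod.mk.injEq, true_and] at this
  exact this.1.symm

theorem schedWT_rhoWit {pick : B → V → V} {σ : List (B × V × V)}
    (hpick : ∀ b v, pick b v ∈ Ty b v) (hσ : ∀ a ∈ σ, a.2.2 ∈ Ty a.1 a.2.1) :
    schedWT Ty (rhoWit pick σ) := by
  intro τ b v
  rw [rhoWit]
  split_ifs with hex
  · obtain ⟨_, -, hdrop⟩ := hex.choose_spec
    exact hσ _ (List.drop_subset τ.length σ (hdrop ▸ List.mem_cons_self))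
  · exact hpick b v

end WitnessSchedule

section BackwardSimulation

variable {B V : Type} {Ty : B → V → Set V} {ρ : List (B × V × V) → B → V → V}
  {τ : List (B × V × V)} {pp : List Bool}

theorem preAt_of_gmod_pos {P : Proc B V} {b : B} {v w : V} {t' : List Bool}
    (h : 0 < gmod ρ P τ pp pp (.bio b pp v w t')) :
    w = ρ τ b v ∧ ∃ pos k, P.PreAt pos b v k ∧ t' = pp ++ pos ++ [true] := by
  obtain ⟨pos, hpos⟩ := exists_pos_of_hSum_pos h
  obtain ⟨_, _, _, _, heq, ht⟩ := exists_of_pm_pos hpos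
  cases heq
  rcases ht with ⟨-, rfl, k, hk⟩ | ⟨α, hα⟩
  · exact ⟨rfl, pos, k, hk, rfl⟩
  · have := congrArg List.length hα
    simp at this

theorem consumed_of_gmodTok_add_eq {P : Proc B V} {d h : Heap B V (List Bool)}
    {t t' : List Bool} {b : B} {v w : V} (hd : deadFor pp d)
    (hH : gmodTok ρ P τ pp pp + d = Heap.single (.token t) + Heap.single (.bio b t v w t') + h) :
    t = pp ∧ 0 < gmod ρ P τ pp pp (.bio b pp v w t') := by
  have ht : t = pp := by
    by_contra hne
    have := congrFun hH (.token t)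
    simp [gmodTok, gmod_token, hd.1, Heap.single, hne] at this
    exact absurd (this ▸ le_self_add : (1 : ℕ∞) ≤ 0) (by simp)
  subst ht
  have hd0 : d (.bio b t v w t') = 0 := by
    by_contra h0
    exact hd.2 _ ⟨b, v, w, t', pos_iff_ne_zero.mpr h0⟩ (List.prefix_refl t)
  have := congrFun hH (.bio b t v w t')
  simp [gmodTok, hd0, Heap.single] at this
  exact ⟨rfl, this ▸ one_pos.trans_le le_self_add⟩

theorem exists_pTrans_of_hTrans_gmodTok {P : Proc B V} {d : Heap B V (List Bool)}
    (hd : deadFor pp d) {b : B} {v w : V} (hρ : ρ τ b v = w) {s : Option (Heap B V (List Bool))}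
    (hstep : HTrans Ty (some (gmodTok ρ P τ pp pp + d)) (b, v, w) s) :
    ∃ P' t' d', s = some (gmodTok ρ P' (τ ++ [(b, v, w)]) t' t' + d') ∧ deadFor t' d' ∧
      PTrans Ty P (b, v, w) P' := by
  generalize hH : gmodTok ρ P τ pp pp + d = H at hstep
  cases hstep with
  | @bio _ _ _ t t' h hw =>
    obtain ⟨rfl, hpos⟩ := consumed_of_gmodTok_add_eq hd hH
    obtain ⟨-, pos, k, hk, rfl⟩ := preAt_of_gmod_pos hpos
    obtain ⟨d', hdec, hd'⟩ := gmod_eq_of_preAt (ρ := ρ) (τ := τ) hk (List.prefix_refl t)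
    refine ⟨k w, _, d' + d, ?_, hd'.add (hd.of_prefix ⟨pos ++ [true], by simp⟩), hk.pTrans hw⟩
    rw [gmodTok, hdec, hρ] at hH
    have hrest : h = gmod ρ (k w) (τ ++ [(b, v, w)]) (t ++ pos ++ [true]) (t ++ pos ++ [true]) +
        (d' + d) := by
      apply Heap.single_add_left_cancel (c := .bio b t v w (t ++ pos ++ [true]))
      apply Heap.single_add_left_cancel (c := .token t)
      rw [← add_assoc, ← hH]
      abel
    rw [hrest, gmodTok, add_assoc]
  | contradict hne _ _ =>
    obtain ⟨rfl, hpos⟩ := consumed_of_gmodTok_add_eq hd hH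
    exact absurd ((preAt_of_gmod_pos hpos).1.trans hρ) hne

/-- The invariant of the run: the canonical model of the residual process, with the token at its
position, plus junk that is dead for that position. -/
theorem exists_mtrans_pES_of_mtrans_hES_gmodTok {σ : List (B × V × V)}
    (hρ : ∀ τ b v w, τ ++ [(b, v, w)] <+: σ → ρ τ b v = w)
    (hτσ : τ <+: σ) {P : Proc B V} {s s' : Option (Heap B V (List Bool))}
    (hm : (hES Ty).mtrans s τ s') (hs : s = some (gmodTok ρ P [] [] [])) :
    ∃ P' pp d, s' = some (gmodTok ρ P' τ pp pp + d) ∧ deadFor pp d ∧ (pES Ty).mtrans P τ P' := by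
  induction hm with
  | nil => exact ⟨P, [], 0, by rw [hs, add_zero], deadFor_zero _, .nil P⟩
  | @snoc _ _ τ e _ hstep ih =>
    obtain ⟨P', pp, d, rfl, hd, hmP⟩ := ih ((List.prefix_append τ [e]).trans hτσ)
    obtain ⟨P'', t', d', rfl, hd', hP⟩ :=
      exists_pTrans_of_hTrans_gmodTok hd (hρ τ _ _ _ hτσ) hstep
    exact ⟨P'', t', d', rfl, hd', hmP.snoc hP⟩

theorem tracesH_canSet_subset (hne : ∀ b v, (Ty b v).Nonempty) (P : Proc B V) :
    tracesH Ty (canSet Ty P) ⊆ (pES Ty).tracesFrom P := by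
  intro τ hτ
  choose pick hpick using hne
  obtain ⟨_, hm₀⟩ := ES.mem_tracesFrom.mp (hτ _ ⟨fun _ => pick, fun _ => hpick, rfl⟩)
  have hρ := schedWT_rhoWit hpick (mem_wellTyped_of_mtrans_hES hm₀)
  obtain ⟨_, hm⟩ := ES.mem_tracesFrom.mp (hτ _ ⟨rhoWit pick τ, hρ, rfl⟩)
  obtain ⟨P', -, -, -, -, hmP⟩ := exists_mtrans_pES_of_mtrans_hES_gmodTok
    (fun _ _ _ _ => rhoWit_eq) (List.prefix_refl τ) hm rfl
  exact ES.mem_tracesFrom.mpr ⟨P', hmP⟩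

end BackwardSimulation

/-- Correctness of the process-to-separation-logic translation: the traces of a
process `P` coincide exactly with the traces of its I/O specification
`emb(P) = ∃t. token(t) ⋆ emb(P, t)`. -/
theorem proc_iospec_trace_equiv {B V : Type} (Ty : B → V → Set V)
    (hne : ∀ b v, (Ty b v).Nonempty) (P : Proc B V) :
    (pES Ty).tracesFrom P = tracesHA Ty (procAssn (List Bool) P) :=
  (tracesFrom_subset_tracesHA P).antisymm
    ((tracesH_anti (canSet_subset_models Ty P)).trans (tracesH_canSet_subset hne P))
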